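/- The Journé generalized filters h_{1,1} = √2·χ_{[-2/7,-1/4)∪(-1/7,1/7)∪[1/4,2/7)}, h_{2,1} = √2·χ_{[-4/7,-1/2)∪[1/2,4/7)}, g_1 = √2·χ_{[-1/4,-1/7)∪[1/7,1/4)}, g_2 = √2·χ_{[-1/7,1/7)} (all 1-periodic, with h_{1,2} = h_{2,2} = 0) satisfy the high-pass normalization Σ_{j=1}^2 [ |g_j(x/2)|² + |g_j((x+1)/2)|² ] = 2 for all x, and the cross-orthogonality Σ_{j=1}^2 [ h_{i,j}(x/2)·conj(g_j(x/2)) + h_{i,j}((x+1)/2)·conj(g_j((x+1)/2)) ] = 0 for i = 1, 2 and all x. -/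
import Mathlib


/-- The 1-periodization of a set `S ⊆ ℝ`. -/
def per (S : Set ℝ) : Set ℝ := {x | ∃ k : ℤ, x + k ∈ S}

/-- Journé filter `h_{1,1} = √2·χ_{[-2/7,-1/4) ∪ (-1/7,1/7) ∪ [1/4,2/7)}`, 1-periodic. -/
noncomputable def jh11 : ℝ → ℝ :=
  Set.indicator (per (Set.Ico (-2/7) (-1/4) ∪ Set.Ioo (-1/7) (1/7) ∪ Set.Ico (1/4) (2/7)))
    (fun _ => Real.sqrt 2)

/-- Journé filter `h_{2,1} = √2·χ_{[-4/7,-1/2) ∪ [1/2,4/7)}`, 1-periodic. -/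
noncomputable def jh21 : ℝ → ℝ :=
  Set.indicator (per (Set.Ico (-4/7) (-1/2) ∪ Set.Ico (1/2) (4/7))) (fun _ => Real.sqrt 2)

/-- The matrix of Journé low-pass filters: `h_{1,2} = h_{2,2} = 0`. -/
noncomputable def jh : Fin 2 → Fin 2 → ℝ → ℝ := ![![jh11, fun _ => 0], ![jh21, fun _ => 0]]

/-- Journé high-pass filter `g_1 = √2·χ_{[-1/4,-1/7) ∪ [1/7,1/4)}`, 1-periodic. -/
noncomputable def jg1 : ℝ → ℝ :=
  Set.indicator (per (Set.Ico (-1/4) (-1/7) ∪ Set.Ico (1/7) (1/4))) (fun _ => Real.sqrt 2)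

/-- Journé high-pass filter `g_2 = √2·χ_{[-1/7,1/7)}`, 1-periodic. -/
noncomputable def jg2 : ℝ → ℝ :=
  Set.indicator (per (Set.Ico (-1/7) (1/7))) (fun _ => Real.sqrt 2)

/-- The pair of Journé high-pass filters. -/
noncomputable def jg : Fin 2 → ℝ → ℝ := ![jg1, jg2]


lemma mem_per_iff {S : Set ℝ} (hS : S ⊆ Set.Ico (-(1/2):ℝ) (1/2)) {y : ℝ} :
    y ∈ per S ↔ Int.fract (y + 1/2) - 1/2 ∈ S := by
  constructor
  · rintro ⟨k, hk⟩
    have h1 := (hS hk).1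
    have h2 := (hS hk).2
    have : Int.fract (y + 1/2) = y + k + 1/2 := by
      rw [show y + 1/2 = (y + k + 1/2) + (-k : ℤ) by push_cast; ring, Int.fract_add_intCast,
        Int.fract_eq_self.mpr ⟨by linarith, by linarith⟩]
    rw [this]
    simpa using hk
  · intro h
    refine ⟨-⌊y + 1/2⌋, ?_⟩
    have : (y : ℝ) + ((-⌊y + 1/2⌋ : ℤ) : ℝ) = Int.fract (y + 1/2) - 1/2 := by
      rw [Int.fract]; push_cast; ring
    rw [this]; exact h

lemma int_bound {k m : ℤ} (h1 : (-1:ℝ) < (k:ℝ) - m) (h2 : ((k:ℝ) - m) < 1) : k = m := by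
  have a1 : (-1 : ℤ) < k - m := by
    exact_mod_cast (show (-1:ℝ) < ((k - m : ℤ) : ℝ) by push_cast; linarith)
  have a2 : (k - m : ℤ) < 1 := by
    exact_mod_cast (show ((k - m : ℤ) : ℝ) < 1 by push_cast; linarith)
  omega

lemma h11g1 (y : ℝ) : jh11 y * jg1 y = 0 := by
  unfold jh11 jg1
  by_cases h : y ∈ per (Set.Ico (-1/4 : ℝ) (-1/7) ∪ Set.Ico (1/7) (1/4))
  · rw [Set.indicator_of_notMem _ _, zero_mul]
    rintro ⟨k, hk⟩
    obtain ⟨m, hm⟩ := h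
    have hb1 : (-2/7 : ℝ) ≤ y + k ∧ y + (k:ℝ) < 2/7 := by
      rcases hk with (⟨a, b⟩ | ⟨a, b⟩) | ⟨a, b⟩ <;> constructor <;> linarith
    have hb2 : (-1/4 : ℝ) ≤ y + m ∧ y + (m:ℝ) < 1/4 := by
      rcases hm with ⟨a, b⟩ | ⟨a, b⟩ <;> constructor <;> linarith
    have hkm : k = m := int_bound (by linarith [hb1.1, hb2.2]) (by linarith [hb1.2, hb2.1])
    subst hkm
    rcases hk with (⟨a, b⟩ | ⟨a, b⟩) | ⟨a, b⟩ <;> rcases hm with ⟨c, d⟩ | ⟨c, d⟩ <;> linarith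
  · rw [Set.indicator_of_notMem h, mul_zero]

lemma h21g1 (y : ℝ) : jh21 y * jg1 y = 0 := by
  unfold jh21 jg1
  by_cases h : y ∈ per (Set.Ico (-1/4 : ℝ) (-1/7) ∪ Set.Ico (1/7) (1/4))
  · rw [Set.indicator_of_notMem _ _, zero_mul]
    rintro ⟨k, hk⟩
    obtain ⟨m, hm⟩ := h
    have hb2 : (-1/4 : ℝ) ≤ y + m ∧ y + (m:ℝ) < 1/4 := by
      rcases hm with ⟨a, b⟩ | ⟨a, b⟩ <;> constructor <;> linarith
    rcases hk with ⟨a, b⟩ | ⟨a, b⟩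
    · have h2 : (k:ℝ) - m < 0 := by linarith [hb2.1]
      have hkm : k = m := int_bound (by linarith [hb2.2]) (by linarith)
      rw [hkm] at h2; simp at h2
    · have h2 : (0:ℝ) < (k:ℝ) - m := by linarith [hb2.2]
      have hkm : k = m := int_bound (by linarith) (by linarith [hb2.1])
      rw [hkm] at h2; simp at h2
  · rw [Set.indicator_of_notMem h, mul_zero]

/-- The Journé generalized filters satisfy the high-pass
normalization `Σⱼ [|g_j(x/2)|² + |g_j((x+1)/2)|²] = 2` and the
cross-orthogonality
`Σⱼ [h_{i,j}(x/2)·conj(g_j(x/2)) + h_{i,j}((x+1)/2)·conj(g_j((x+1)/2))] = 0`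
for `i = 1, 2` and all `x`. -/
theorem stmt5 :
    (∀ x : ℝ, ∑ j : Fin 2, ((jg j (x/2)) ^ 2 + (jg j ((x+1)/2)) ^ 2) = 2) ∧
    (∀ (i : Fin 2) (x : ℝ),
      ∑ j : Fin 2, (jh i j (x/2) * jg j (x/2) + jh i j ((x+1)/2) * jg j ((x+1)/2)) = 0) := by
  constructor
  · intro x
    classical
    have hsubA1 : (Set.Ico (-1/4 : ℝ) (-1/7) ∪ Set.Ico (1/7) (1/4)) ⊆
        Set.Ico (-(1/2):ℝ) (1/2) := by
      rintro z (⟨a, b⟩ | ⟨a, b⟩) <;> exact ⟨by linarith, by linarith⟩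
    have hsubA2 : (Set.Ico (-1/7 : ℝ) (1/7)) ⊆ Set.Ico (-(1/2):ℝ) (1/2) := by
      rintro z ⟨a, b⟩; exact ⟨by linarith, by linarith⟩
    have K : ∀ (S : Set ℝ), S ⊆ Set.Ico (-(1/2):ℝ) (1/2) → ∀ z : ℝ,
        Set.indicator (per S) (fun _ => Real.sqrt 2) z =
          if Int.fract (z + 1/2) - 1/2 ∈ S then Real.sqrt 2 else 0 := by
      intro S hS z
      rw [Set.indicator_apply]
      congr 1
      simp only [eq_iff_iff]
      exact mem_per_iff hS
    set u := Int.fract (x/2 + 1/2) with hu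
    have hu0 : 0 ≤ u := Int.fract_nonneg _
    have hu1 : u < 1 := Int.fract_lt_one _
    have e1 : Int.fract ((x+1)/2 + 1/2) = if u < 1/2 then u + 1/2 else u - 1/2 := by
      split_ifs with h'
      · rw [show (x+1)/2 + 1/2 = ((⌊x/2 + 1/2⌋ : ℤ) : ℝ) + (u + 1/2) by
          rw [hu, Int.fract]; ring,
          Int.fract_intCast_add, Int.fract_eq_self.mpr ⟨by linarith, by linarith⟩]
      · push_neg at h'
        rw [show (x+1)/2 + 1/2 = ((⌊x/2 + 1/2⌋ + 1 : ℤ) : ℝ) + (u - 1/2) by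
          rw [hu, Int.fract]; push_cast; ring,
          Int.fract_intCast_add, Int.fract_eq_self.mpr ⟨by linarith, by linarith⟩]
    have hs : Real.sqrt 2 ^ 2 = 2 := Real.sq_sqrt (by norm_num)
    simp only [jg, jg1, jg2, Fin.sum_univ_two, Matrix.cons_val_zero, Matrix.cons_val_one,
      Matrix.head_cons]
    rw [K _ hsubA1 (x/2), K _ hsubA1 ((x+1)/2), K _ hsubA2 (x/2), K _ hsubA2 ((x+1)/2),
      e1, ← hu]
    rcases lt_or_ge u (1/2) with hc | hc
    · rw [if_pos hc, show u + 1/2 - 1/2 = u by ring]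
      rcases lt_or_ge u (1/7) with h1 | h1
      · rw [if_neg, if_neg, if_neg, if_pos]
        · norm_num [hs]
        · exact ⟨by linarith, by linarith⟩
        · rintro ⟨a, b⟩; linarith
        · rintro (⟨a, b⟩ | ⟨a, b⟩) <;> linarith
        · rintro (⟨a, b⟩ | ⟨a, b⟩) <;> linarith
      rcases lt_or_ge u (1/4) with h2 | h2
      · rw [if_neg, if_pos, if_neg, if_neg]
        · norm_num [hs]
        · rintro ⟨a, b⟩; linarith
        · rintro ⟨a, b⟩; linarith
        · exact Or.inr ⟨h1, h2⟩
        · rintro (⟨a, b⟩ | ⟨a, b⟩) <;> linarith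
      rcases lt_or_ge u (5/14) with h3 | h3
      · rw [if_pos, if_neg, if_neg, if_neg]
        · norm_num [hs]
        · rintro ⟨a, b⟩; linarith
        · rintro ⟨a, b⟩; linarith
        · rintro (⟨a, b⟩ | ⟨a, b⟩) <;> linarith
        · exact Or.inl ⟨by linarith, by linarith⟩
      · rw [if_neg, if_neg, if_pos, if_neg]
        · norm_num [hs]
        · rintro ⟨a, b⟩; linarith
        · exact ⟨by linarith, by linarith⟩
        · rintro (⟨a, b⟩ | ⟨a, b⟩) <;> linarith
        · rintro (⟨a, b⟩ | ⟨a, b⟩) <;> linarith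
    · rw [if_neg (not_lt.mpr hc), show u - 1/2 - 1/2 = u - 1 by ring]
      rcases lt_or_ge u (9/14) with h1 | h1
      · rw [if_neg, if_neg, if_pos, if_neg]
        · norm_num [hs]
        · rintro ⟨a, b⟩; linarith
        · exact ⟨by linarith, by linarith⟩
        · rintro (⟨a, b⟩ | ⟨a, b⟩) <;> linarith
        · rintro (⟨a, b⟩ | ⟨a, b⟩) <;> linarith
      rcases lt_or_ge u (3/4) with h2 | h2
      · rw [if_pos, if_neg, if_neg, if_neg]
        · norm_num [hs]
        · rintro ⟨a, b⟩; linarith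
        · rintro ⟨a, b⟩; linarith
        · rintro (⟨a, b⟩ | ⟨a, b⟩) <;> linarith
        · exact Or.inr ⟨by linarith, by linarith⟩
      rcases lt_or_ge u (6/7) with h3 | h3
      · rw [if_neg, if_pos, if_neg, if_neg]
        · norm_num [hs]
        · rintro ⟨a, b⟩; linarith
        · rintro ⟨a, b⟩; linarith
        · exact Or.inl ⟨by linarith, by linarith⟩
        · rintro (⟨a, b⟩ | ⟨a, b⟩) <;> linarith
      · rw [if_neg, if_neg, if_neg, if_pos]
        · norm_num [hs]
        · exact ⟨by linarith, by linarith⟩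
        · rintro ⟨a, b⟩; linarith
        · rintro (⟨a, b⟩ | ⟨a, b⟩) <;> linarith
        · rintro (⟨a, b⟩ | ⟨a, b⟩) <;> linarith
  · intro i x
    fin_cases i <;>
      simp [jh, jg, Fin.sum_univ_two, h11g1, h21g1]
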